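/- Let H be a Hopf quasigroup with antipode S. The map T₁ : H ⊗ H → H ⊗ H, T₁(x ⊗ y) = Σ x₍₁₎ ⊗ x₍₂₎y, is bijective with inverse T₁⁻¹(x ⊗ y) = Σ x₍₁₎ ⊗ S(x₍₂₎)y. -/
import Mathlib


open TensorProduct

/-- The data of a Hopf quasigroup without its antipode: a unital (possibly nonassociative)
algebra together with a coassociative counital comultiplication which, together with the
counit, is an algebra homomorphism. Everything is expressed in terms of linear maps, so that
Sweedler-notation identities become equalities of composites of linear maps. -/
structure HopfQuasigroupData (k H : Type*) [Field k] [AddCommGroup H] [Module k H] where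
  /-- the (possibly nonassociative) multiplication -/
  mul : H ⊗[k] H →ₗ[k] H
  /-- the unit element -/
  one : H
  /-- the comultiplication -/
  comul : H →ₗ[k] H ⊗[k] H
  /-- the counit -/
  counit : H →ₗ[k] k
  one_mul : ∀ x : H, mul (one ⊗ₜ[k] x) = x
  mul_one : ∀ x : H, mul (x ⊗ₜ[k] one) = x
  coassoc : (TensorProduct.assoc k H H H).toLinearMap ∘ₗ comul.rTensor H ∘ₗ comul =
    comul.lTensor H ∘ₗ comul
  counit_comul : (TensorProduct.lid k H).toLinearMap ∘ₗ counit.rTensor H ∘ₗ comul =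
    LinearMap.id
  comul_counit : (TensorProduct.rid k H).toLinearMap ∘ₗ counit.lTensor H ∘ₗ comul =
    LinearMap.id
  comul_mul : comul ∘ₗ mul = TensorProduct.map mul mul ∘ₗ
    (TensorProduct.tensorTensorTensorComm k H H H H).toLinearMap ∘ₗ
      TensorProduct.map comul comul
  comul_one : comul one = one ⊗ₜ[k] one
  counit_mul : ∀ x y : H, counit (mul (x ⊗ₜ[k] y)) = counit x * counit y
  counit_one : counit one = 1

namespace HopfQuasigroupData

variable {k H : Type*} [Field k] [AddCommGroup H] [Module k H]

/-- The linear map `h ⊗ g ↦ ε(h)g`. -/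
noncomputable def εl (D : HopfQuasigroupData k H) : H ⊗[k] H →ₗ[k] H :=
  (TensorProduct.lid k H).toLinearMap ∘ₗ D.counit.rTensor H

/-- The linear map `g ⊗ h ↦ ε(h)g`. -/
noncomputable def εr (D : HopfQuasigroupData k H) : H ⊗[k] H →ₗ[k] H :=
  (TensorProduct.rid k H).toLinearMap ∘ₗ D.counit.lTensor H

/-- `S` is an antipode for the Hopf quasigroup data `D`:
`Σ S(h₁)(h₂g) = Σ h₁(S(h₂)g) = ε(h)g` and `Σ (gS(h₁))h₂ = Σ (gh₁)S(h₂) = ε(h)g`. -/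
def IsAntipode (D : HopfQuasigroupData k H) (S : H →ₗ[k] H) : Prop :=
  (D.mul ∘ₗ TensorProduct.map S D.mul ∘ₗ (TensorProduct.assoc k H H H).toLinearMap ∘ₗ
      D.comul.rTensor H = D.εl) ∧
  (D.mul ∘ₗ TensorProduct.map LinearMap.id (D.mul ∘ₗ S.rTensor H) ∘ₗ
      (TensorProduct.assoc k H H H).toLinearMap ∘ₗ D.comul.rTensor H = D.εl) ∧
  (D.mul ∘ₗ TensorProduct.map (D.mul ∘ₗ S.lTensor H) LinearMap.id ∘ₗ
      (TensorProduct.assoc k H H H).symm.toLinearMap ∘ₗ D.comul.lTensor H = D.εr) ∧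
  (D.mul ∘ₗ TensorProduct.map D.mul S ∘ₗ
      (TensorProduct.assoc k H H H).symm.toLinearMap ∘ₗ D.comul.lTensor H = D.εr)

end HopfQuasigroupData

variable {k H : Type*} [Field k] [AddCommGroup H] [Module k H]

/-- `T₁ : H ⊗ H → H ⊗ H`, `T₁(x ⊗ y) = Σ x₍₁₎ ⊗ x₍₂₎y`. -/
noncomputable def T₁ (D : HopfQuasigroupData k H) : H ⊗[k] H →ₗ[k] H ⊗[k] H :=
  D.mul.lTensor H ∘ₗ (TensorProduct.assoc k H H H).toLinearMap ∘ₗ D.comul.rTensor H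

/-- `T₁⁻¹(x ⊗ y) = Σ x₍₁₎ ⊗ S(x₍₂₎)y`. -/
noncomputable def T₁inv (D : HopfQuasigroupData k H) (S : H →ₗ[k] H) :
    H ⊗[k] H →ₗ[k] H ⊗[k] H :=
  (D.mul ∘ₗ S.rTensor H).lTensor H ∘ₗ (TensorProduct.assoc k H H H).toLinearMap ∘ₗ
    D.comul.rTensor H


private lemma auxS1 (g : H ⊗[k] H →ₗ[k] H) (y : H) (u : H ⊗[k] H) :
    (g.lTensor H) ((TensorProduct.assoc k H H H) (u ⊗ₜ[k] y)) =
      ((g ∘ₗ (TensorProduct.mk k H H).flip y).lTensor H) u := by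
  induction u using TensorProduct.induction_on with
  | zero => simp
  | tmul a b => simp
  | add u v hu hv => simp [add_tmul, hu, hv]

private lemma auxS2 (D : HopfQuasigroupData k H) (g : H ⊗[k] H →ₗ[k] H) (f : H →ₗ[k] H)
    (u : H ⊗[k] H) :
    (g.lTensor H) ((TensorProduct.assoc k H H H) ((D.comul.rTensor H) ((f.lTensor H) u))) =
      ((g ∘ₗ f.lTensor H).lTensor H) ((TensorProduct.assoc k H H H) ((D.comul.rTensor H) u)) := by
  induction u using TensorProduct.induction_on with
  | zero => simp
  | tmul a b =>
      simp only [LinearMap.lTensor_tmul, LinearMap.rTensor_tmul]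
      generalize D.comul a = t
      induction t using TensorProduct.induction_on with
      | zero => simp
      | tmul p q => simp
      | add t s ht hs => simp only [add_tmul, map_add, ht, hs]
  | add u v hu hv => simp [hu, hv]

private lemma auxS4 (D : HopfQuasigroupData k H) (y : H) (t : H ⊗[k] H) :
    ((D.counit.smulRight y).lTensor H) t =
      ((TensorProduct.rid k H) ((D.counit.lTensor H) t)) ⊗ₜ[k] y := by
  induction t using TensorProduct.induction_on with
  | zero => simp
  | tmul a b =>
      simp only [LinearMap.lTensor_tmul, LinearMap.smulRight_apply, TensorProduct.rid_tmul,
        TensorProduct.smul_tmul]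
  | add t s ht hs => simp [add_tmul, ht, hs]

private lemma comp_eq_id (D : HopfQuasigroupData k H) (g₁ g₂ : H ⊗[k] H →ₗ[k] H)
    (hax : ∀ (h y : H),
      g₂ (((g₁ ∘ₗ (TensorProduct.mk k H H).flip y).lTensor H) (D.comul h)) = D.counit h • y) :
    (g₂.lTensor H ∘ₗ (TensorProduct.assoc k H H H).toLinearMap ∘ₗ D.comul.rTensor H) ∘ₗ
      (g₁.lTensor H ∘ₗ (TensorProduct.assoc k H H H).toLinearMap ∘ₗ D.comul.rTensor H) =
        LinearMap.id := by
  apply TensorProduct.ext'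
  intro x y
  have hco : (TensorProduct.assoc k H H H) ((D.comul.rTensor H) (D.comul x)) =
      (D.comul.lTensor H) (D.comul x) := LinearMap.congr_fun D.coassoc x
  have hcu : (TensorProduct.rid k H) ((D.counit.lTensor H) (D.comul x)) = x :=
    LinearMap.congr_fun D.comul_counit x
  set f := g₁ ∘ₗ (TensorProduct.mk k H H).flip y with hf
  have hmap : (g₂ ∘ₗ f.lTensor H) ∘ₗ D.comul = D.counit.smulRight y := by
    apply LinearMap.ext
    intro h
    simpa using hax h y
  calc ((g₂.lTensor H ∘ₗ (TensorProduct.assoc k H H H).toLinearMap ∘ₗ D.comul.rTensor H) ∘ₗ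
      (g₁.lTensor H ∘ₗ (TensorProduct.assoc k H H H).toLinearMap ∘ₗ D.comul.rTensor H))
        (x ⊗ₜ[k] y)
      = (g₂.lTensor H) ((TensorProduct.assoc k H H H) ((D.comul.rTensor H)
          ((f.lTensor H) (D.comul x)))) := by
        simp only [LinearMap.comp_apply, LinearMap.rTensor_tmul, LinearEquiv.coe_coe]
        rw [auxS1 g₁ y (D.comul x), ← hf]
    _ = ((g₂ ∘ₗ f.lTensor H).lTensor H)
          ((TensorProduct.assoc k H H H) ((D.comul.rTensor H) (D.comul x))) :=
        auxS2 D g₂ f (D.comul x)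
    _ = (((g₂ ∘ₗ f.lTensor H) ∘ₗ D.comul).lTensor H) (D.comul x) := by
        rw [hco]
        simp only [← LinearMap.lTensor_comp_apply, LinearMap.comp_assoc]
    _ = ((D.counit.smulRight y).lTensor H) (D.comul x) := by rw [hmap]
    _ = x ⊗ₜ[k] y := by rw [auxS4, hcu]
    _ = LinearMap.id (x ⊗ₜ[k] y) := rfl

/-- For a Hopf quasigroup `H` with antipode `S`, the map
`T₁(x ⊗ y) = Σ x₍₁₎ ⊗ x₍₂₎y` is bijective with inverse `T₁⁻¹(x ⊗ y) = Σ x₍₁₎ ⊗ S(x₍₂₎)y`. -/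
theorem hopfQuasigroup_T₁_bijective (D : HopfQuasigroupData k H) (S : H →ₗ[k] H)
    (hS : D.IsAntipode S) :
    Function.Bijective (T₁ D) ∧
      T₁ D ∘ₗ T₁inv D S = LinearMap.id ∧ T₁inv D S ∘ₗ T₁ D = LinearMap.id := by
  obtain ⟨h1, h2, _h3, _h4⟩ := hS
  have hax1 : ∀ (h y : H),
      (D.mul ∘ₗ S.rTensor H)
        (((D.mul ∘ₗ (TensorProduct.mk k H H).flip y).lTensor H) (D.comul h)) =
        D.counit h • y := by
    intro h y
    have key : ∀ t : H ⊗[k] H,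
        (D.mul ∘ₗ S.rTensor H)
          (((D.mul ∘ₗ (TensorProduct.mk k H H).flip y).lTensor H) t) =
        D.mul ((TensorProduct.map S D.mul)
          ((TensorProduct.assoc k H H H) (t ⊗ₜ[k] y))) := by
      intro t
      induction t using TensorProduct.induction_on with
      | zero => simp
      | tmul p q => simp
      | add t s ht hs =>
          simp only [add_tmul, map_add, LinearMap.comp_apply] at ht hs ⊢
          rw [ht, hs]
    rw [key (D.comul h)]
    have := LinearMap.congr_fun h1 (h ⊗ₜ[k] y)
    simp only [LinearMap.comp_apply, LinearMap.rTensor_tmul, LinearEquiv.coe_coe] at this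
    rw [this]
    simp [HopfQuasigroupData.εl]
  have hax2 : ∀ (h y : H),
      D.mul
        ((((D.mul ∘ₗ S.rTensor H) ∘ₗ (TensorProduct.mk k H H).flip y).lTensor H) (D.comul h)) =
        D.counit h • y := by
    intro h y
    have key : ∀ t : H ⊗[k] H,
        D.mul
          ((((D.mul ∘ₗ S.rTensor H) ∘ₗ (TensorProduct.mk k H H).flip y).lTensor H) t) =
        D.mul ((TensorProduct.map LinearMap.id (D.mul ∘ₗ S.rTensor H))
          ((TensorProduct.assoc k H H H) (t ⊗ₜ[k] y))) := by
      intro t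
      induction t using TensorProduct.induction_on with
      | zero => simp
      | tmul p q => simp
      | add t s ht hs =>
          simp only [add_tmul, map_add, LinearMap.comp_apply] at ht hs ⊢
          rw [ht, hs]
    rw [key (D.comul h)]
    have := LinearMap.congr_fun h2 (h ⊗ₜ[k] y)
    simp only [LinearMap.comp_apply, LinearMap.rTensor_tmul, LinearEquiv.coe_coe] at this
    rw [this]
    simp [HopfQuasigroupData.εl]
  have hT'T : T₁inv D S ∘ₗ T₁ D = LinearMap.id :=
    comp_eq_id D D.mul (D.mul ∘ₗ S.rTensor H) hax1
  have hTT' : T₁ D ∘ₗ T₁inv D S = LinearMap.id :=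
    comp_eq_id D (D.mul ∘ₗ S.rTensor H) D.mul hax2
  refine ⟨⟨?_, ?_⟩, hTT', hT'T⟩
  · intro a b hab
    have := congrArg (T₁inv D S) hab
    simpa using congrArg (fun m => m) (by
      have h1' := LinearMap.congr_fun hT'T a
      have h2' := LinearMap.congr_fun hT'T b
      simp only [LinearMap.comp_apply, LinearMap.id_apply] at h1' h2'
      rw [← h1', ← h2', this])
  · intro z
    refine ⟨T₁inv D S z, ?_⟩
    have := LinearMap.congr_fun hTT' z
    simpa using this
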